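/- arXiv:1501.04647 — 2 statements merged into one kernel-verified Lean document; each statement's English description precedes it below -/
import Mathlib

section
/- Let G be a finite simple graph of order n ≥ 2 that is k-adjacency dimensional. Then adim_k(G) = n if and only if C_k(G) = V(G). -/
open Finset

namespace AdjDim

noncomputable section
open Classical

variable {V W : Type*}

/-- Truncated distance `d_{G,2}(x,y) = min(d_G(x,y), 2)`:
`0` if `x = y`, `1` if `x` and `y` are adjacent, and `2` otherwise. -/
def d2 (G : SimpleGraph V) (x y : V) : ℕ :=
  if x = y then 0 else if G.Adj x y then 1 else 2

/-- `S` is a `k`-adjacency generator for `G`: every pair of distinct vertices is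
distinguished (w.r.t. `d_{G,2}`) by at least `k` vertices of `S`. -/
def IsKAdjGen (G : SimpleGraph V) [Fintype V] (k : ℕ) (S : Finset V) : Prop :=
  ∀ x y : V, x ≠ y → k ≤ (S.filter (fun w => d2 G x w ≠ d2 G y w)).card

/-- The `k`-adjacency dimension of `G`: the minimum cardinality of a
`k`-adjacency generator. -/
def adim (G : SimpleGraph V) [Fintype V] (k : ℕ) : ℕ :=
  sInf {n | ∃ S : Finset V, IsKAdjGen G k S ∧ S.card = n}

/-- `B` is a `k`-adjacency basis of `G`: a `k`-adjacency generator of minimum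
cardinality. -/
def IsKAdjBasis (G : SimpleGraph V) [Fintype V] (k : ℕ) (B : Finset V) : Prop :=
  IsKAdjGen G k B ∧ B.card = adim G k

/-- `G` is `k`-adjacency dimensional: `k` is the largest integer for which a
`k`-adjacency generator exists. -/
def IsKAdjDimensional (G : SimpleGraph V) [Fintype V] (k : ℕ) : Prop :=
  (∃ S : Finset V, IsKAdjGen G k S) ∧
    ∀ k' : ℕ, k < k' → ¬ ∃ S : Finset V, IsKAdjGen G k' S

/-- `C_G(x,y)`: the set of vertices distinguishing `x` and `y` w.r.t. `d_{G,2}`. -/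
def CSet (G : SimpleGraph V) [Fintype V] (x y : V) : Finset V :=
  univ.filter (fun z => d2 G x z ≠ d2 G y z)

/-- `C(G) = min_{x ≠ y} |C_G(x,y)|`. -/
def Cmin (G : SimpleGraph V) [Fintype V] : ℕ :=
  sInf {m | ∃ x y : V, x ≠ y ∧ (CSet G x y).card = m}

/-- `C_k(G)`: the union of the sets `C_G(x,y)` over pairs of distinct vertices
with `|C_G(x,y)| = k`. -/
def Ck (G : SimpleGraph V) [Fintype V] (k : ℕ) : Finset V :=
  univ.filter (fun z => ∃ x y : V, x ≠ y ∧ (CSet G x y).card = k ∧ z ∈ CSet G x y)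

/-- Two distinct vertices `x, y` are twins: every other vertex is at the same
truncated distance from both. -/
def Twins (G : SimpleGraph V) (x y : V) : Prop :=
  x ≠ y ∧ ∀ z : V, z ≠ x → z ≠ y → d2 G x z = d2 G y z

/-- The join `G + H` of two vertex-disjoint graphs. -/
def join (G : SimpleGraph V) (H : SimpleGraph W) : SimpleGraph (V ⊕ W) where
  Adj x y :=
    match x, y with
    | Sum.inl a, Sum.inl b => G.Adj a b
    | Sum.inr a, Sum.inr b => H.Adj a b
    | Sum.inl _, Sum.inr _ => True
    | Sum.inr _, Sum.inl _ => True
  symm := by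
    constructor
    rintro (a | a) (b | b) h
    · exact G.adj_symm h
    · trivial
    · trivial
    · exact H.adj_symm h
  loopless := by
    constructor
    rintro (a | a) h
    · exact G.irrefl h
    · exact H.irrefl h

/-- `K_1 + H`: the join of a one-vertex graph with `H`, i.e. `H` together with a
new universal vertex. -/
def K1join (H : SimpleGraph W) : SimpleGraph (Unit ⊕ W) :=
  join (⊥ : SimpleGraph Unit) H

/-!
Generators are closed upwards, so `V` is a `k`-generator and `adim_k(G) < n` iff some
`V \ {v}` is one. Deleting `v` lowers the number of vertices distinguishing `x, y` by one
exactly when `v ∈ C_G(x,y)`, so `V \ {v}` stays a `k`-generator iff no pair with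
`|C_G(x,y)| = k` is distinguished by `v`, i.e. iff `v ∉ C_k(G)`.
-/

section

variable [Fintype V] {G : SimpleGraph V} {k : ℕ}

theorem isKAdjGen_univ_iff :
    IsKAdjGen G k univ ↔ ∀ x y : V, x ≠ y → k ≤ #(CSet G x y) :=
  Iff.rfl

theorem IsKAdjGen.mono {S T : Finset V} (hS : IsKAdjGen G k S) (hST : S ⊆ T) :
    IsKAdjGen G k T :=
  fun x y hxy => (hS x y hxy).trans (card_le_card (filter_subset_filter _ hST))

theorem isKAdjGen_univ_of_exists (h : ∃ S, IsKAdjGen G k S) : IsKAdjGen G k univ :=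
  h.elim fun S hS => hS.mono (subset_univ S)

theorem adim_le_card {S : Finset V} (hS : IsKAdjGen G k S) : adim G k ≤ #S :=
  Nat.sInf_le ⟨S, hS, rfl⟩

theorem exists_isKAdjBasis (h : ∃ S, IsKAdjGen G k S) : ∃ B, IsKAdjBasis G k B :=
  h.elim fun S hS => Nat.sInf_mem (s := {n | ∃ S, IsKAdjGen G k S ∧ #S = n}) ⟨#S, S, hS, rfl⟩

theorem isKAdjGen_univ_erase_iff (hk : IsKAdjGen G k univ) (v : V) :
    IsKAdjGen G k (univ.erase v) ↔ v ∉ Ck G k := by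
  have hfilter (x y : V) :
      (univ.erase v).filter (fun w => d2 G x w ≠ d2 G y w) = (CSet G x y).erase v :=
    filter_erase _ _ _
  simp only [IsKAdjGen, hfilter, Ck, mem_filter, mem_univ, true_and, not_exists, not_and]
  constructor
  · intro h x y hxy hcard hv
    have hlt := card_erase_lt_of_mem hv
    have := h x y hxy
    omega
  · intro h x y hxy
    have hkC := isKAdjGen_univ_iff.1 hk x y hxy
    by_cases hv : v ∈ CSet G x y
    · have hne : #(CSet G x y) ≠ k := fun hcard => h x y hxy hcard hv
      rw [card_erase_of_mem hv]
      omega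
    · rwa [erase_eq_of_notMem hv]

theorem adim_lt_card_iff (hk : IsKAdjGen G k univ) :
    adim G k < Fintype.card V ↔ ∃ v, IsKAdjGen G k (univ.erase v) := by
  constructor
  · intro hlt
    obtain ⟨B, hB, hcard⟩ := exists_isKAdjBasis ⟨univ, hk⟩
    obtain ⟨v, -, hv⟩ := exists_mem_notMem_of_card_lt_card (s := B) (t := univ)
      (by rwa [hcard, card_univ])
    exact ⟨v, hB.mono (subset_erase.2 ⟨subset_univ B, hv⟩)⟩
  · rintro ⟨v, hv⟩
    calc adim G k ≤ #(univ.erase v) := adim_le_card hv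
      _ < #(univ : Finset V) := card_erase_lt_of_mem (mem_univ v)
      _ = Fintype.card V := card_univ

end

theorem adim_eq_card_iff_Ck_eq_univ_general [Fintype V] (G : SimpleGraph V)
    (k : ℕ) (hdim : IsKAdjDimensional G k) :
    adim G k = Fintype.card V ↔ Ck G k = Finset.univ := by
  have huniv := isKAdjGen_univ_of_exists hdim.1
  have hle : adim G k ≤ Fintype.card V := card_univ (α := V) ▸ adim_le_card huniv
  calc adim G k = Fintype.card V ↔ ¬ adim G k < Fintype.card V := hle.not_lt_iff_eq.symm
    _ ↔ ∀ v, v ∈ Ck G k := by simp [adim_lt_card_iff huniv, isKAdjGen_univ_erase_iff huniv]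
    _ ↔ Ck G k = univ := eq_univ_iff_forall.symm

/-- Theorem 3.4: for a `k`-adjacency dimensional graph `G` of order `n ≥ 2`,
`adim_k(G) = n` if and only if `C_k(G) = V(G)`. -/
theorem adim_eq_card_iff_Ck_eq_univ [Fintype V] (G : SimpleGraph V)
    (h : 2 ≤ Fintype.card V) (k : ℕ) (hdim : IsKAdjDimensional G k) :
    adim G k = Fintype.card V ↔ Ck G k = Finset.univ :=
  adim_eq_card_iff_Ck_eq_univ_general G k hdim

end
end AdjDim
end

section
/- Let G be a finite simple graph of order n ≥ 7 and let k be an integer with 1 ≤ k ≤ C(G). Then adim_k(G) ≥ k + 2. -/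
open Finset

namespace AdjDim

noncomputable section
open Classical

variable {V W : Type*}

/-
If `S` is a `k`-adjacency generator with `|S| ≤ k + 1`, then removing at most two vertices
`a, b` from `S` leaves fewer than `k` vertices, so every pair of distinct vertices is
distinguished by `a` or by `b`. Hence `v ↦ (d₂(v, a), d₂(v, b))` is injective. Its values
lie in `{0, 1, 2}²`, and a coordinate vanishes only at `v = a` or `v = b`, so there are
at most `4 + 2 = 6` vertices.
-/

lemma d2_eq_zero_iff (G : SimpleGraph V) {x y : V} : d2 G x y = 0 ↔ x = y := by
  unfold d2
  split_ifs <;> simp_all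

lemma d2_le_two (G : SimpleGraph V) (x y : V) : d2 G x y ≤ 2 := by
  unfold d2
  split_ifs <;> omega

lemma d2_mem_Icc_of_ne (G : SimpleGraph V) {x y : V} (h : x ≠ y) :
    d2 G x y ∈ Icc 1 2 := by
  have := (d2_eq_zero_iff G).not.mpr h
  have := d2_le_two G x y
  simp only [mem_Icc]
  omega

lemma card_le_six_of_forall_ne_d2 [Fintype V] (G : SimpleGraph V) (a b : V)
    (h : ∀ x y, x ≠ y → d2 G x a ≠ d2 G y a ∨ d2 G x b ≠ d2 G y b) :
    Fintype.card V ≤ 6 := by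
  set f : V → ℕ × ℕ := fun v => (d2 G v a, d2 G v b)
  have hf : Function.Injective f := by
    intro x y hxy
    by_contra hne
    rcases h x y hne with ha | hb
    · exact ha (congrArg Prod.fst hxy)
    · exact hb (congrArg Prod.snd hxy)
  have himage : univ.image f ⊆ insert (f a) (insert (f b) (Icc 1 2 ×ˢ Icc 1 2)) := by
    rintro _ hp
    obtain ⟨v, -, rfl⟩ := mem_image.mp hp
    by_cases hva : v = a
    · simp [hva]
    by_cases hvb : v = b
    · simp [hvb]
    exact mem_insert_of_mem <| mem_insert_of_mem <|
      mem_product.mpr ⟨d2_mem_Icc_of_ne G hva, d2_mem_Icc_of_ne G hvb⟩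
  calc Fintype.card V = (univ.image f).card := (card_image_of_injective _ hf).symm
    _ ≤ (insert (f a) (insert (f b) (Icc 1 2 ×ˢ Icc 1 2))).card := card_le_card himage
    _ ≤ 6 := (card_insert_le _ _).trans (Nat.succ_le_succ ((card_insert_le _ _).trans (by simp)))

lemma exists_card_erase_erase_lt {α : Type*} [DecidableEq α] [Nonempty α] {k : ℕ}
    (S : Finset α) (hk : 1 ≤ k) (hS : S.card ≤ k + 1) :
    ∃ a b, ((S.erase a).erase b).card < k := by
  rcases S.eq_empty_or_nonempty with rfl | ⟨a, ha⟩
  · obtain ⟨a⟩ := ‹Nonempty α›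
    exact ⟨a, a, by rw [erase_empty, erase_empty, card_empty]; omega⟩
  rcases (S.erase a).eq_empty_or_nonempty with he | ⟨b, hb⟩
  · exact ⟨a, a, by rw [he, erase_empty, card_empty]; omega⟩
  · exact ⟨a, b, by rw [card_erase_of_mem hb, card_erase_of_mem ha]; omega⟩

lemma IsKAdjGen.ne_d2_or_ne_d2 [Fintype V] {G : SimpleGraph V} {k : ℕ} {S : Finset V}
    (hS : IsKAdjGen G k S) {a b : V} (hab : ((S.erase a).erase b).card < k)
    {x y : V} (hxy : x ≠ y) : d2 G x a ≠ d2 G y a ∨ d2 G x b ≠ d2 G y b := by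
  by_contra! hsame
  have hsub : S.filter (fun w => d2 G x w ≠ d2 G y w) ⊆ (S.erase a).erase b := by
    intro w hw
    obtain ⟨hwS, hw⟩ := mem_filter.mp hw
    refine mem_erase.mpr ⟨?_, mem_erase.mpr ⟨?_, hwS⟩⟩ <;> rintro rfl
    exacts [hw hsame.2, hw hsame.1]
  exact absurd ((hS x y hxy).trans (card_le_card hsub)) (not_le.mpr hab)

lemma IsKAdjGen.add_two_le_card [Fintype V] {G : SimpleGraph V} {k : ℕ} {S : Finset V}
    (hS : IsKAdjGen G k S) (hV : 7 ≤ Fintype.card V) (hk : 1 ≤ k) : k + 2 ≤ S.card := by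
  by_contra! hcard
  have : Nonempty V := Fintype.card_pos_iff.mp (by omega)
  obtain ⟨a, b, hab⟩ := exists_card_erase_erase_lt S hk (by omega)
  have := card_le_six_of_forall_ne_d2 G a b fun x y hxy => hS.ne_d2_or_ne_d2 hab hxy
  omega

lemma isKAdjGen_univ_of_le_Cmin [Fintype V] {G : SimpleGraph V} {k : ℕ} (hk : k ≤ Cmin G) :
    IsKAdjGen G k univ := fun x y hxy =>
  hk.trans (Nat.sInf_le ⟨x, y, hxy, rfl⟩)

/-- Theorem 3.10: for any graph of order `n ≥ 7` and `1 ≤ k ≤ C(G)`,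
`adim_k(G) ≥ k + 2`. -/
theorem adim_ge_k_add_two [Fintype V] (G : SimpleGraph V)
    (h : 7 ≤ Fintype.card V) (k : ℕ) (hk1 : 1 ≤ k) (hk2 : k ≤ Cmin G) :
    k + 2 ≤ adim G k := by
  -- `hk2` makes the set of generator sizes nonempty, so `sInf` is not the junk value `0`.
  have hne : {n | ∃ S : Finset V, IsKAdjGen G k S ∧ S.card = n}.Nonempty :=
    ⟨_, univ, isKAdjGen_univ_of_le_Cmin hk2, rfl⟩
  refine le_csInf hne ?_
  rintro _ ⟨S, hS, rfl⟩
  exact hS.add_two_le_card h hk1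

end
end AdjDim
end
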